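/- arXiv:2604.06780 — 2 statements merged into one kernel-verified Lean document; each statement's English description precedes it below -/
import Mathlib

section
/- Let B ⊂ ℝⁿ be a ball and M : B → ℝ^{n×n} a.e. symmetric positive definite with |M(x)||M(x)⁻¹| ≤ Λ a.e. Define (M)^{log}_B = exp(⨍_B log M(x) dx), using matrix exponential and logarithm. Then (M)^{log}_B is symmetric positive definite and for every ξ ∈ ℝⁿ, Λ⁻¹ |(M)^{log}_B| |ξ| ≤ |(M)^{log}_B ξ| ≤ |(M)^{log}_B| |ξ|. -/
/-!
Diagonalising a self-adjoint `T` shows `‖exp T‖ = exp λ_max(T)` and `exp ⟪T u, u⟫ ≤ ‖exp T‖`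
for every unit vector `u`. For `A = ⨍ L` take unit top eigenvectors `u` of `A` and `w` of `-A`:
then `‖exp A‖ ‖exp (-A)‖ ≤ exp ⨍ (⟪L u, u⟫ - ⟪L w, w⟫)`, and at a point `x` where this
integrand is at least its mean the bound becomes
`‖exp (L x)‖ ‖exp (-L x)‖ = ‖M x‖ ‖(M x)⁻¹‖ ≤ Λ`.
The lower bound then follows from `‖ξ‖ ≤ ‖exp (-A)‖ ‖exp A ξ‖`.
-/

open Set MeasureTheory Metric
open scoped RealInnerProductSpace ENNReal

theorem NormedSpace.exp_neg_mul_exp {𝔸 : Type*} [NormedRing 𝔸] [NormedAlgebra ℝ 𝔸]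
    [CompleteSpace 𝔸] (x : 𝔸) : exp (-x) * exp x = 1 := by
  let +nondep : NormedAlgebra ℚ 𝔸 := .restrictScalars ℚ ℝ 𝔸
  rw [← exp_add_of_commute (Commute.refl x).neg_left, neg_add_cancel, exp_zero]

theorem NormedSpace.exp_apply_of_apply_eq_smul {F : Type*} [NormedAddCommGroup F]
    [NormedSpace ℝ F] [CompleteSpace F] {T : F →L[ℝ] F} {c : ℝ} {u : F} (h : T u = c • u) :
    exp T u = Real.exp c • u := by
  have hpow : ∀ k : ℕ, (T ^ k) u = c ^ k • u := by
    intro k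
    induction k with
    | zero => simp
    | succ k ih => rw [pow_succ', mul_apply_eq_comp, ih, map_smul, h, smul_smul, ← pow_succ]
  have hT := (exp_series_hasSum_exp' (𝕂 := ℝ) T).mapL (ContinuousLinearMap.apply ℝ F u)
  have hc := (exp_series_hasSum_exp' (𝕂 := ℝ) c).smul_const u
  rw [← Real.exp_eq_exp_ℝ] at hc
  refine hT.unique (hc.congr_fun fun k => ?_)
  simp [hpow, smul_smul]

section Eigenbasis

variable {E ι : Type*} [NormedAddCommGroup E] [InnerProductSpace ℝ E] [CompleteSpace E]
  [Fintype ι] (b : OrthonormalBasis ι ℝ E) {S : E →L[ℝ] E} {ν : ι → ℝ}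

theorem OrthonormalBasis.inner_apply_of_apply_eq_smul (hS : IsSelfAdjoint S)
    (hb : ∀ i, S (b i) = ν i • b i) (i : ι) (v : E) : ⟪b i, S v⟫ = ν i * ⟪b i, v⟫ := by
  rw [← ContinuousLinearMap.coe_coe, ← hS.isSymmetric, ContinuousLinearMap.coe_coe, hb,
    real_inner_smul_left]

theorem OrthonormalBasis.inner_apply_self_eq_sum (hS : IsSelfAdjoint S)
    (hb : ∀ i, S (b i) = ν i • b i) (v : E) : ⟪S v, v⟫ = ∑ i, ν i * ⟪b i, v⟫ ^ 2 := by
  rw [real_inner_comm, ← b.sum_inner_mul_inner]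
  refine Finset.sum_congr rfl fun i _ => ?_
  rw [b.inner_apply_of_apply_eq_smul hS hb, real_inner_comm]
  ring

theorem OrthonormalBasis.inner_apply_self_le (hS : IsSelfAdjoint S)
    (hb : ∀ i, S (b i) = ν i • b i) {m : ℝ} (hm : ∀ i, ν i ≤ m) (v : E) :
    ⟪S v, v⟫ ≤ m * ‖v‖ ^ 2 := by
  rw [b.inner_apply_self_eq_sum hS hb, ← b.sum_sq_inner_right, Finset.mul_sum]
  exact Finset.sum_le_sum fun i _ => mul_le_mul_of_nonneg_right (hm i) (sq_nonneg _)

theorem OrthonormalBasis.le_inner_apply_self (hS : IsSelfAdjoint S)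
    (hb : ∀ i, S (b i) = ν i • b i) {m : ℝ} (hm : ∀ i, m ≤ ν i) (v : E) :
    m * ‖v‖ ^ 2 ≤ ⟪S v, v⟫ := by
  rw [b.inner_apply_self_eq_sum hS hb, ← b.sum_sq_inner_right, Finset.mul_sum]
  exact Finset.sum_le_sum fun i _ => mul_le_mul_of_nonneg_right (hm i) (sq_nonneg _)

theorem OrthonormalBasis.norm_le_of_abs_le (hS : IsSelfAdjoint S)
    (hb : ∀ i, S (b i) = ν i • b i) {m : ℝ} (hm₀ : 0 ≤ m) (hm : ∀ i, |ν i| ≤ m) : ‖S‖ ≤ m := by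
  refine S.opNorm_le_bound hm₀ fun v => ?_
  refine (pow_le_pow_iff_left₀ (norm_nonneg _) (by positivity) two_ne_zero).1 ?_
  rw [← b.sum_sq_inner_right, mul_pow, ← b.sum_sq_inner_right, Finset.mul_sum]
  refine Finset.sum_le_sum fun i _ => ?_
  rw [b.inner_apply_of_apply_eq_smul hS hb, mul_pow]
  have hνm : ν i ^ 2 ≤ m ^ 2 := sq_le_sq.2 (by rw [abs_of_nonneg hm₀]; exact hm i)
  exact mul_le_mul_of_nonneg_right hνm (sq_nonneg _)

end Eigenbasis

namespace IsSelfAdjoint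

variable {E : Type*} [NormedAddCommGroup E] [InnerProductSpace ℝ E] [FiniteDimensional ℝ E]
  {T : E →L[ℝ] E}

theorem apply_eigenvectorBasis (hT : IsSelfAdjoint T) (i : Fin (Module.finrank ℝ E)) :
    T (hT.isSymmetric.eigenvectorBasis rfl i) =
      hT.isSymmetric.eigenvalues rfl i • hT.isSymmetric.eigenvectorBasis rfl i :=
  hT.isSymmetric.apply_eigenvectorBasis rfl i

theorem exp_apply_eigenvectorBasis (hT : IsSelfAdjoint T) (i : Fin (Module.finrank ℝ E)) :
    NormedSpace.exp T (hT.isSymmetric.eigenvectorBasis rfl i) =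
      Real.exp (hT.isSymmetric.eigenvalues rfl i) • hT.isSymmetric.eigenvectorBasis rfl i :=
  NormedSpace.exp_apply_of_apply_eq_smul (hT.apply_eigenvectorBasis i)

theorem exists_eigenvalues_max [Nontrivial E] (hT : IsSelfAdjoint T) :
    ∃ i₀, ∀ i, hT.isSymmetric.eigenvalues rfl i ≤ hT.isSymmetric.eigenvalues rfl i₀ :=
  have : Nonempty (Fin (Module.finrank ℝ E)) := Fin.pos_iff_nonempty.1 Module.finrank_pos
  Finite.exists_max _

theorem exists_eigenvalues_min [Nontrivial E] (hT : IsSelfAdjoint T) :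
    ∃ i₀, ∀ i, hT.isSymmetric.eigenvalues rfl i₀ ≤ hT.isSymmetric.eigenvalues rfl i :=
  have : Nonempty (Fin (Module.finrank ℝ E)) := Fin.pos_iff_nonempty.1 Module.finrank_pos
  Finite.exists_min _

theorem exp_inner_self_le_norm_exp (hT : IsSelfAdjoint T) {u : E} (hu : ‖u‖ = 1) :
    Real.exp ⟪T u, u⟫ ≤ ‖NormedSpace.exp T‖ := by
  have : Nontrivial E := nontrivial_of_ne u 0 (norm_ne_zero_iff.1 (by simp [hu]))
  set b := hT.isSymmetric.eigenvectorBasis rfl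
  obtain ⟨i₀, hi₀⟩ := hT.exists_eigenvalues_max
  calc Real.exp ⟪T u, u⟫ ≤ Real.exp (hT.isSymmetric.eigenvalues rfl i₀) := by
        simpa [hu] using b.inner_apply_self_le hT hT.apply_eigenvectorBasis hi₀ u
    _ = ‖NormedSpace.exp T (b i₀)‖ := by
        rw [hT.exp_apply_eigenvectorBasis, norm_smul, b.norm_eq_one,
          Real.norm_of_nonneg (Real.exp_pos _).le, mul_one]
    _ ≤ ‖NormedSpace.exp T‖ := by
        simpa [b.norm_eq_one] using (NormedSpace.exp T).le_opNorm (b i₀)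

theorem exists_norm_exp_le_exp_inner_self [Nontrivial E] (hT : IsSelfAdjoint T) :
    ∃ u, ‖u‖ = 1 ∧ ‖NormedSpace.exp T‖ ≤ Real.exp ⟪T u, u⟫ := by
  set b := hT.isSymmetric.eigenvectorBasis rfl
  obtain ⟨i₀, hi₀⟩ := hT.exists_eigenvalues_max
  refine ⟨b i₀, b.norm_eq_one i₀, ?_⟩
  rw [hT.apply_eigenvectorBasis, real_inner_smul_left, real_inner_self_eq_norm_sq, b.norm_eq_one,
    one_pow, mul_one]
  refine b.norm_le_of_abs_le hT.exp hT.exp_apply_eigenvectorBasis (Real.exp_pos _).le fun i => ?_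
  rw [abs_of_pos (Real.exp_pos _)]
  exact Real.exp_le_exp.2 (hi₀ i)

theorem inner_exp_apply_self_pos (hT : IsSelfAdjoint T) {u : E} (hu : u ≠ 0) :
    0 < ⟪NormedSpace.exp T u, u⟫ := by
  have : Nontrivial E := nontrivial_of_ne u 0 hu
  obtain ⟨i₀, hi₀⟩ := hT.exists_eigenvalues_min
  exact (mul_pos (Real.exp_pos _) (pow_pos (norm_pos_iff.2 hu) 2)).trans_le
    ((hT.isSymmetric.eigenvectorBasis rfl).le_inner_apply_self hT.exp
      hT.exp_apply_eigenvectorBasis (fun i => Real.exp_le_exp.2 (hi₀ i)) u)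

end IsSelfAdjoint

section SetAverage

variable {X E : Type*} [MeasurableSpace X] {μ : Measure X} {s : Set X}

theorem setAverage_sub {f g : X → ℝ} (hf : IntegrableOn f s μ) (hg : IntegrableOn g s μ) :
    ⨍ x in s, (f x - g x) ∂μ = ⨍ x in s, f x ∂μ - ⨍ x in s, g x ∂μ := by
  simp only [setAverage_eq, integral_sub hf hg, smul_sub]

variable [NormedAddCommGroup E] [InnerProductSpace ℝ E] {L : X → E →L[ℝ] E}

theorem integrableOn_inner_apply (hL : IntegrableOn L s μ) (u v : E) :
    IntegrableOn (fun x => ⟪L x u, v⟫) s μ :=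
  (Integrable.apply_continuousLinearMap hL u).inner_const v

theorem inner_setAverage_apply [CompleteSpace E] (hL : IntegrableOn L s μ) (u v : E) :
    ⟪(⨍ x in s, L x ∂μ) u, v⟫ = ⨍ x in s, ⟪L x u, v⟫ ∂μ := by
  rw [setAverage_eq, setAverage_eq, smul_apply, ContinuousLinearMap.integral_apply hL,
    real_inner_smul_left, real_inner_comm, ← integral_inner (hL.apply_continuousLinearMap u),
    smul_eq_mul]
  simp only [real_inner_comm v]

theorem isSelfAdjoint_setAverage [CompleteSpace E] (hs : MeasurableSet s)
    (hL : IntegrableOn L s μ) (hsa : ∀ x ∈ s, IsSelfAdjoint (L x)) :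
    IsSelfAdjoint (⨍ x in s, L x ∂μ) := by
  refine LinearMap.IsSymmetric.isSelfAdjoint fun u v => ?_
  simp only [ContinuousLinearMap.coe_coe]
  rw [← real_inner_comm u, inner_setAverage_apply hL, inner_setAverage_apply hL]
  refine setAverage_congr_fun hs (ae_of_all _ fun x hx => ?_)
  rw [← ContinuousLinearMap.coe_coe, (hsa x hx).isSymmetric, real_inner_comm,
    ContinuousLinearMap.coe_coe]

theorem norm_exp_setAverage_mul_norm_exp_neg_le [FiniteDimensional ℝ E] (hs : MeasurableSet s)
    (hμ : μ s ≠ 0) (hμ' : μ s ≠ ∞) (hL : IntegrableOn L s μ)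
    (hsa : ∀ x ∈ s, IsSelfAdjoint (L x)) {Λ : ℝ}
    (hκ : ∀ x ∈ s, ‖NormedSpace.exp (L x)‖ * ‖NormedSpace.exp (-L x)‖ ≤ Λ) :
    ‖NormedSpace.exp (⨍ x in s, L x ∂μ)‖ * ‖NormedSpace.exp (-⨍ x in s, L x ∂μ)‖ ≤ Λ := by
  set A := ⨍ x in s, L x ∂μ
  rcases subsingleton_or_nontrivial E with hE | hE
  · obtain ⟨x, hx⟩ := nonempty_of_measure_ne_zero hμ
    have hΛ : 0 ≤ Λ := (mul_nonneg (norm_nonneg _) (norm_nonneg _)).trans (hκ x hx)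
    simpa [Subsingleton.elim (NormedSpace.exp A) 0] using hΛ
  have hA := isSelfAdjoint_setAverage hs hL hsa
  obtain ⟨u, hu, hAu⟩ := hA.exists_norm_exp_le_exp_inner_self
  obtain ⟨w, hw, hAw⟩ := hA.neg.exists_norm_exp_le_exp_inner_self
  have hf := (integrableOn_inner_apply hL u u).sub (integrableOn_inner_apply hL w w)
  obtain ⟨x, hx, hfx⟩ := exists_setAverage_le hμ hμ' hf
  calc ‖NormedSpace.exp A‖ * ‖NormedSpace.exp (-A)‖
      ≤ Real.exp ⟪A u, u⟫ * Real.exp ⟪(-A) w, w⟫ :=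
        mul_le_mul hAu hAw (norm_nonneg _) (Real.exp_pos _).le
    _ = Real.exp (⨍ y in s, (⟪L y u, u⟫ - ⟪L y w, w⟫) ∂μ) := by
        rw [setAverage_sub (integrableOn_inner_apply hL u u) (integrableOn_inner_apply hL w w),
          ← inner_setAverage_apply hL, ← inner_setAverage_apply hL, sub_eq_add_neg, Real.exp_add,
          neg_apply, inner_neg_left]
    _ ≤ Real.exp (⟪L x u, u⟫ - ⟪L x w, w⟫) := Real.exp_le_exp.2 hfx
    _ = Real.exp ⟪L x u, u⟫ * Real.exp ⟪(-L x) w, w⟫ := by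
        rw [sub_eq_add_neg, Real.exp_add, neg_apply, inner_neg_left]
    _ ≤ ‖NormedSpace.exp (L x)‖ * ‖NormedSpace.exp (-L x)‖ :=
        mul_le_mul ((hsa x hx).exp_inner_self_le_norm_exp hu)
          ((hsa x hx).neg.exp_inner_self_le_norm_exp hw) (Real.exp_pos _).le (norm_nonneg _)
    _ ≤ Λ := hκ x hx

end SetAverage

theorem ContinuousLinearMap.inv_mul_norm_mul_norm_le_norm_apply {𝕜 F G : Type*}
    [NontriviallyNormedField 𝕜] [NormedAddCommGroup F] [NormedSpace 𝕜 F] [NormedAddCommGroup G]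
    [NormedSpace 𝕜 G] (P : F →L[𝕜] G) (Q : G →L[𝕜] F) (hQP : Function.LeftInverse Q P) {Λ : ℝ}
    (hΛ : ‖P‖ * ‖Q‖ ≤ Λ) (ξ : F) : Λ⁻¹ * ‖P‖ * ‖ξ‖ ≤ ‖P ξ‖ := by
  rcases le_or_gt Λ 0 with hΛ₀ | hΛ₀
  · have : Λ⁻¹ * ‖P‖ * ‖ξ‖ ≤ 0 := mul_nonpos_of_nonpos_of_nonneg
      (mul_nonpos_of_nonpos_of_nonneg (inv_nonpos.2 hΛ₀) (norm_nonneg _)) (norm_nonneg _)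
    exact this.trans (norm_nonneg _)
  rw [mul_assoc, inv_mul_le_iff₀ hΛ₀]
  calc ‖P‖ * ‖ξ‖ = ‖P‖ * ‖Q (P ξ)‖ := by rw [hQP ξ]
    _ ≤ ‖P‖ * (‖Q‖ * ‖P ξ‖) := by gcongr; exact Q.le_opNorm _
    _ = (‖P‖ * ‖Q‖) * ‖P ξ‖ := by ring
    _ ≤ Λ * ‖P ξ‖ := by gcongr

theorem stmt6_general (n : ℕ) (x₀ : EuclideanSpace ℝ (Fin n)) (r : ℝ) (hr : 0 < r) (Λ : ℝ)
    (M Minv L : EuclideanSpace ℝ (Fin n) →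
      (EuclideanSpace ℝ (Fin n) →L[ℝ] EuclideanSpace ℝ (Fin n)))
    (hinv : ∀ x ∈ ball x₀ r,
      (M x).comp (Minv x) = ContinuousLinearMap.id ℝ (EuclideanSpace ℝ (Fin n)) ∧
      (Minv x).comp (M x) = ContinuousLinearMap.id ℝ (EuclideanSpace ℝ (Fin n)))
    (hΛ : ∀ x ∈ ball x₀ r, ‖M x‖ * ‖Minv x‖ ≤ Λ)
    (hLsymm : ∀ x ∈ ball x₀ r, ∀ u v, ⟪L x u, v⟫ = ⟪u, L x v⟫)
    (hexp : ∀ x ∈ ball x₀ r, NormedSpace.exp (L x) = M x)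
    (hLint : IntegrableOn L (ball x₀ r)) :
    (∀ u v, ⟪(NormedSpace.exp (⨍ x in ball x₀ r, L x)) u, v⟫ =
        ⟪u, (NormedSpace.exp (⨍ x in ball x₀ r, L x)) v⟫) ∧
    (∀ u, u ≠ 0 → 0 < ⟪(NormedSpace.exp (⨍ x in ball x₀ r, L x)) u, u⟫) ∧
    (∀ ξ : EuclideanSpace ℝ (Fin n),
      Λ⁻¹ * ‖NormedSpace.exp (⨍ x in ball x₀ r, L x)‖ * ‖ξ‖ ≤
        ‖(NormedSpace.exp (⨍ x in ball x₀ r, L x)) ξ‖ ∧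
      ‖(NormedSpace.exp (⨍ x in ball x₀ r, L x)) ξ‖ ≤
        ‖NormedSpace.exp (⨍ x in ball x₀ r, L x)‖ * ‖ξ‖) := by
  set A := ⨍ x in ball x₀ r, L x
  have hsa : ∀ x ∈ ball x₀ r, IsSelfAdjoint (L x) := fun x hx =>
    LinearMap.IsSymmetric.isSelfAdjoint (hLsymm x hx)
  have hA : IsSelfAdjoint A := isSelfAdjoint_setAverage measurableSet_ball hLint hsa
  have hκ : ∀ x ∈ ball x₀ r, ‖NormedSpace.exp (L x)‖ * ‖NormedSpace.exp (-L x)‖ ≤ Λ := by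
    intro x hx
    have hMinv : NormedSpace.exp (-L x) = Minv x :=
      left_inv_eq_right_inv (hexp x hx ▸ NormedSpace.exp_neg_mul_exp (L x)) (hinv x hx).1
    rw [hexp x hx, hMinv]
    exact hΛ x hx
  have hκA := norm_exp_setAverage_mul_norm_exp_neg_le measurableSet_ball
    (measure_ball_pos volume x₀ hr).ne' measure_ball_lt_top.ne hLint hsa hκ
  refine ⟨hA.exp.isSymmetric, fun u hu => hA.inner_exp_apply_self_pos hu, fun ξ => ⟨?_, ?_⟩⟩
  · refine ContinuousLinearMap.inv_mul_norm_mul_norm_le_norm_apply _ _ (fun η => ?_) hκA ξ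
    rw [← mul_apply_eq_comp, NormedSpace.exp_neg_mul_exp, one_apply_eq_self]
  · exact (NormedSpace.exp A).le_opNorm ξ

/-- Let `M : B → ℝ^{n×n}` be a.e. (here: everywhere on the ball `B`)
symmetric positive definite with `‖M(x)‖ ‖M(x)⁻¹‖ ≤ Λ`, let `L = log M` be its matrix
logarithm, and define the logarithmic average `(M)^{log}_B = exp(⨍_B log M)`.
Then `(M)^{log}_B` is symmetric positive definite and for every `ξ`,
`Λ⁻¹ ‖(M)^{log}_B‖ ‖ξ‖ ≤ ‖(M)^{log}_B ξ‖ ≤ ‖(M)^{log}_B‖ ‖ξ‖`. -/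
theorem stmt6 (n : ℕ) (x₀ : EuclideanSpace ℝ (Fin n)) (r : ℝ) (hr : 0 < r) (Λ : ℝ)
    (M Minv L : EuclideanSpace ℝ (Fin n) →
      (EuclideanSpace ℝ (Fin n) →L[ℝ] EuclideanSpace ℝ (Fin n)))
    (hMsymm : ∀ x ∈ ball x₀ r, ∀ u v, ⟪M x u, v⟫ = ⟪u, M x v⟫)
    (hMpd : ∀ x ∈ ball x₀ r, ∀ u, u ≠ 0 → 0 < ⟪M x u, u⟫)
    (hinv : ∀ x ∈ ball x₀ r,
      (M x).comp (Minv x) = ContinuousLinearMap.id ℝ (EuclideanSpace ℝ (Fin n)) ∧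
      (Minv x).comp (M x) = ContinuousLinearMap.id ℝ (EuclideanSpace ℝ (Fin n)))
    (hΛ : ∀ x ∈ ball x₀ r, ‖M x‖ * ‖Minv x‖ ≤ Λ)
    (hLsymm : ∀ x ∈ ball x₀ r, ∀ u v, ⟪L x u, v⟫ = ⟪u, L x v⟫)
    (hexp : ∀ x ∈ ball x₀ r, NormedSpace.exp (L x) = M x)
    (hLint : IntegrableOn L (ball x₀ r)) :
    (∀ u v, ⟪(NormedSpace.exp (⨍ x in ball x₀ r, L x)) u, v⟫ =
        ⟪u, (NormedSpace.exp (⨍ x in ball x₀ r, L x)) v⟫) ∧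
    (∀ u, u ≠ 0 → 0 < ⟪(NormedSpace.exp (⨍ x in ball x₀ r, L x)) u, u⟫) ∧
    (∀ ξ : EuclideanSpace ℝ (Fin n),
      Λ⁻¹ * ‖NormedSpace.exp (⨍ x in ball x₀ r, L x)‖ * ‖ξ‖ ≤
        ‖(NormedSpace.exp (⨍ x in ball x₀ r, L x)) ξ‖ ∧
      ‖(NormedSpace.exp (⨍ x in ball x₀ r, L x)) ξ‖ ≤
        ‖NormedSpace.exp (⨍ x in ball x₀ r, L x)‖ * ‖ξ‖) :=
  stmt6_general n x₀ r hr Λ M Minv L hinv hΛ hLsymm hexp hLint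
end

section
/- Let G, H ∈ 𝒩 with κ := sup_{t≥0} H(t)/(G(t) + G(t)^{1+α/n}) < ∞, let a ∈ C^{0,α}(B_r) with a ≥ 0, r ≤ 1, and suppose sup_{B_r} a ≤ 4[a]_α r^α. Then for every nonnegative measurable f on B_r and every θ ∈ (0,1), the pointwise bound Ψ(x,t) := G(t) + a(x)H(t) satisfies: ⨍_{B_r} Ψ(x, f(x)) dx ≤ c ⨍_{B_r} G(f) dx + c κ r^α ⨍_{B_r} G(f)^{1+α/n} dx, for a constant c depending only on [a]_α, κ, and the indices of G and H. -/
/-!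
On `B_r` the weight satisfies `0 ≤ a ≤ 4[a]_α r^α`, so pointwise
`Ψ(x, f) ≤ (1 + 4[a]_α κ r^α) G(f) + 4[a]_α κ r^α G(f)^{1+α/n}`, and `r^α ≤ 1` lets one constant
`c = (1 + 4[a]_α)(1 + κ)` absorb both coefficients. Averaging over `B_r` gives the claim.
-/
open Set Filter MeasureTheory Metric

/-- A Young function of class 𝒩: `Φ ∈ C¹([0,∞)) ∩ C²((0,∞))` is convex and increasing on
`[0,∞)`, `Φ(0) = 0`, `Φ(t) → ∞` as `t → ∞`, and `i ≤ tΦ''(t)/Φ'(t) ≤ s` for all `t > 0`,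
where `0 < i ≤ s`.  The functions `Φ'` and `Φ''` are the first and second derivatives. -/
structure IsNFun (Φ Φ' Φ'' : ℝ → ℝ) (i s : ℝ) : Prop where
  i_pos : 0 < i
  i_le_s : i ≤ s
  hasDeriv : ∀ t ∈ Ici (0:ℝ), HasDerivWithinAt Φ (Φ' t) (Ici 0) t
  derivCont : ContinuousOn Φ' (Ici 0)
  hasDeriv2 : ∀ t ∈ Ioi (0:ℝ), HasDerivAt Φ' (Φ'' t) t
  deriv2Cont : ContinuousOn Φ'' (Ioi 0)
  convexOn : ConvexOn ℝ (Ici 0) Φ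
  monoOn : MonotoneOn Φ (Ici 0)
  map_zero : Φ 0 = 0
  tendsto_top : Tendsto Φ atTop atTop
  idx_lower : ∀ t ∈ Ioi (0:ℝ), i ≤ t * Φ'' t / Φ' t
  idx_upper : ∀ t ∈ Ioi (0:ℝ), t * Φ'' t / Φ' t ≤ s

open scoped ENNReal

namespace MeasureTheory

variable {X : Type*} [MeasurableSpace X] {μ : Measure X}

theorem average_mono_of_nonneg {F g : X → ℝ} (hF : 0 ≤ᵐ[μ] F) (hg : Integrable g μ)
    (hle : F ≤ᵐ[μ] g) : ⨍ x, F x ∂μ ≤ ⨍ x, g x ∂μ := by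
  rw [average_eq', average_eq']
  exact integral_mono_of_nonneg (Measure.ae_smul_measure hF _) hg.to_average
    (Measure.ae_smul_measure hle _)

theorem average_nonneg {g : X → ℝ} (hg : 0 ≤ᵐ[μ] g) : 0 ≤ ⨍ x, g x ∂μ := by
  rw [average_eq']
  exact integral_nonneg_of_ae (Measure.ae_smul_measure hg _)

theorem average_const_mul_add_const_mul {g₁ g₂ : X → ℝ} (hg₁ : Integrable g₁ μ)
    (hg₂ : Integrable g₂ μ) (A B : ℝ) :
    ⨍ x, (A * g₁ x + B * g₂ x) ∂μ = A * ⨍ x, g₁ x ∂μ + B * ⨍ x, g₂ x ∂μ := by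
  simp only [average_eq']
  rw [integral_add (hg₁.to_average.const_mul A) (hg₂.to_average.const_mul B),
    integral_const_mul, integral_const_mul]

theorem setAverage_add_const {E : Type*} [NormedAddCommGroup E] [NormedSpace ℝ E]
    [CompleteSpace E] {s : Set X} (hs₀ : μ s ≠ 0) (hs : μ s ≠ ∞) {g : X → E}
    (hg : IntegrableOn g s μ) (C : E) :
    ⨍ x in s, (g x + C) ∂μ = ⨍ x in s, g x ∂μ + C := by
  have : IsFiniteMeasure (μ.restrict s) := isFiniteMeasure_restrict.2 hs
  have : NeZero (μ.restrict s) := ⟨by simpa using hs₀⟩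
  simp only [average_eq']
  rw [integral_add hg.to_average (integrable_const C), integral_const, probReal_univ, one_smul]

end MeasureTheory

theorem IsNFun.nonneg {Φ Φ' Φ'' : ℝ → ℝ} {i s : ℝ} (hΦ : IsNFun Φ Φ' Φ'' i s) {t : ℝ}
    (ht : 0 ≤ t) : 0 ≤ Φ t := by
  simpa [hΦ.map_zero] using hΦ.monoOn self_mem_Ici ht ht

theorem add_mul_le_of_le_mul_add {g g' h a A κ : ℝ} (ha : 0 ≤ a) (haA : a ≤ A) (hh : 0 ≤ h)
    (hhκ : h ≤ κ * (g + g')) : g + a * h ≤ (1 + A * κ) * g + A * κ * g' := by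
  have := mul_le_mul haA hhκ hh (ha.trans haA)
  linarith

/-- Let `G, H ∈ 𝒩` with `H(t) ≤ κ(G(t)+G(t)^{1+α/n})`, let
`a ∈ C^{0,α}(B_r)` be nonnegative with `[a]_α ≤ Ha`, `r ≤ 1`, and
`sup_{B_r} a ≤ 4[a]_α r^α`.  Then for every nonnegative measurable `f`,
`⨍_{B_r} (G(f) + a H(f)) ≤ c ⨍_{B_r} G(f) + c κ r^α ⨍_{B_r} G(f)^{1+α/n}`,
with `c` depending only on `[a]_α`, `κ` and the indices of `G` and `H`. -/
theorem stmt11 (n : ℕ) (α κ Ha iG sG iH sH : ℝ) (hα : α ∈ Ioc (0:ℝ) 1)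
    (hκ : 0 ≤ κ) (hHa : 0 ≤ Ha) :
    ∃ c > (0:ℝ), ∀ (G G' G'' H H' H'' : ℝ → ℝ),
      IsNFun G G' G'' iG sG → IsNFun H H' H'' iH sH →
      (∀ t ≥ (0:ℝ), H t ≤ κ * (G t + G t ^ (1 + α / (n:ℝ)))) →
      ∀ (x₀ : EuclideanSpace ℝ (Fin n)) (r : ℝ), 0 < r → r ≤ 1 →
      ∀ (a : EuclideanSpace ℝ (Fin n) → ℝ),
        (∀ x ∈ ball x₀ r, 0 ≤ a x) →
        (∀ x ∈ ball x₀ r, ∀ y ∈ ball x₀ r, |a x - a y| ≤ Ha * dist x y ^ α) →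
        (∀ x ∈ ball x₀ r, a x ≤ 4 * Ha * r ^ α) →
      ∀ (f : EuclideanSpace ℝ (Fin n) → ℝ), (∀ x, 0 ≤ f x) → Measurable f →
        IntegrableOn (fun x => G (f x)) (ball x₀ r) →
        IntegrableOn (fun x => G (f x) ^ (1 + α / (n:ℝ))) (ball x₀ r) →
        ⨍ x in ball x₀ r, (G (f x) + a x * H (f x)) ≤
          c * ⨍ x in ball x₀ r, G (f x) +
            c * κ * r ^ α * ⨍ x in ball x₀ r, G (f x) ^ (1 + α / (n:ℝ)) := by
  refine ⟨(1 + 4 * Ha) * (1 + κ), by positivity, ?_⟩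
  intro G G' G'' H H' H'' hG hH hGH x₀ r hr hr1 a ha₀ _ haB f hf _ hGf hGpf
  set p := 1 + α / (n : ℝ)
  set c := (1 + 4 * Ha) * (1 + κ)
  have hrα : r ^ α ≤ 1 := Real.rpow_le_one hr.le hr1 hα.1.le
  have hκrα : 0 ≤ κ * r ^ α := by positivity
  have hc₁ : 1 + 4 * Ha * r ^ α * κ ≤ c := by
    nlinarith [mul_le_mul_of_nonneg_left hrα (by positivity : 0 ≤ 4 * Ha * κ)]
  have hc₂ : 4 * Ha * r ^ α * κ ≤ c * (c * κ * r ^ α) := by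
    have h1 : 1 + 4 * Ha ≤ c := le_mul_of_one_le_right (by positivity) (by linarith)
    have : 4 * Ha ≤ c * c := by nlinarith
    nlinarith [mul_le_mul_of_nonneg_right this hκrα]
  have hG₀ : ∀ x, 0 ≤ G (f x) := fun x => hG.nonneg (hf x)
  calc ⨍ x in ball x₀ r, (G (f x) + a x * H (f x))
      ≤ ⨍ x in ball x₀ r, ((1 + 4 * Ha * r ^ α * κ) * G (f x) +
          4 * Ha * r ^ α * κ * G (f x) ^ p) := by
        refine average_mono_of_nonneg ?_ ((hGf.const_mul _).add (hGpf.const_mul _)) ?_ <;>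
          filter_upwards [ae_restrict_mem measurableSet_ball] with x hx
        · exact add_nonneg (hG₀ x) (mul_nonneg (ha₀ x hx) (hH.nonneg (hf x)))
        · exact add_mul_le_of_le_mul_add (ha₀ x hx) (haB x hx) (hH.nonneg (hf x)) (hGH _ (hf x))
    _ = (1 + 4 * Ha * r ^ α * κ) * (⨍ x in ball x₀ r, G (f x)) +
          4 * Ha * r ^ α * κ * ⨍ x in ball x₀ r, G (f x) ^ p :=
        average_const_mul_add_const_mul hGf hGpf _ _
    _ ≤ c * (⨍ x in ball x₀ r, G (f x)) +
          c * (c * κ * r ^ α) * ⨍ x in ball x₀ r, G (f x) ^ p := by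
        gcongr
        · exact average_nonneg (ae_of_all _ hG₀)
        · exact average_nonneg (ae_of_all _ fun x => Real.rpow_nonneg (hG₀ x) p)
    _ = _ := by
        -- `⨍` binds as far right as possible, so the target's right-hand side is
        -- `c * ⨍ x in ball x₀ r, (G (f x) + c * κ * r ^ α * ⨍ y in ball x₀ r, G (f y) ^ p)`.
        rw [setAverage_add_const (measure_ball_pos volume x₀ hr).ne' measure_ball_lt_top.ne hGf]
        ring
end
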